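/- arXiv:1009.3205 — 2 statements merged into one kernel-verified Lean document; each statement's English description precedes it below -/
import Mathlib

section
/- Let X be a nodal curve and q a polarization on X. A polarization q on X is non-degenerate if and only if for some (equivalently, every) smoothing X² of X at its separating nodes, the induced polarization q² on X² is general, where q²_Z := q_{Z̄} for a subcurve Z of X² specializing to the subcurve Z̄ of X. -/
open Finset

variable {V E : Type}

/-- Number of edges in `F` joining a vertex of `A` with a vertex of `B`. -/
def valS [DecidableEq V] [DecidableEq E] (ends : E → V × V) (F : Finset E)
    (A B : Finset V) : ℕ :=
  (F.filter (fun e => ((ends e).1 ∈ A ∧ (ends e).2 ∈ B) ∨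
    ((ends e).1 ∈ B ∧ (ends e).2 ∈ A))).card

/-- Number of edges of the graph joining `A` and `B`. -/
def valAB [Fintype E] [DecidableEq V] [DecidableEq E] (ends : E → V × V)
    (A B : Finset V) : ℕ :=
  valS ends Finset.univ A B

/-- Number of edges of `F` with both endpoints in `W` (loops included). -/
def insideE [DecidableEq V] [DecidableEq E] (ends : E → V × V) (W : Finset V)
    (F : Finset E) : ℕ :=
  (F.filter (fun e => (ends e).1 ∈ W ∧ (ends e).2 ∈ W)).card

/-- The Laplacian of the graph with vertex set `V` and edge set `F`. -/
def lapF [Fintype V] [Fintype E] [DecidableEq V] [DecidableEq E] (ends : E → V × V)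
    (F : Finset E) (d : V → ℤ) (v : V) : ℤ :=
  -d v * (valS ends F {v} {v}ᶜ : ℤ) +
    ∑ w ∈ Finset.univ.erase v, d w * (valS ends F {v} {w} : ℤ)

/-- Characteristic 0-cochain of a set of vertices. -/
def chi [DecidableEq V] (A : Finset V) (v : V) : ℤ := if v ∈ A then 1 else 0

/-- Reachability using edges belonging to `F`. -/
def Reaches (ends : E → V × V) (F : Finset E) (u v : V) : Prop :=
  Relation.ReflTransGen (fun a b => ∃ e ∈ F, ends e = (a, b) ∨ ends e = (b, a)) u v

/-- Connectedness of the graph with vertex set `V` and edge set `F`. -/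
def ConnF (ends : E → V × V) (F : Finset E) : Prop :=
  ∀ u v : V, Reaches ends F u v

/-- Complexity: the number of spanning trees using edges from `F`
(a spanning tree is a connected spanning subgraph with `|V| - 1` edges). -/
noncomputable def complexity [Fintype V] (ends : E → V × V) (F : Finset E) : ℕ :=
  {T : Finset E | T ⊆ F ∧ ConnF ends T ∧ T.card = Fintype.card V - 1}.ncard

/-- The quantity η(d, W) = -d_W - |S ∩ E(Γ[W])| + q_W - val(W)/2. -/
def eta [Fintype V] [Fintype E] [DecidableEq V] [DecidableEq E]
    (ends : E → V × V) (S : Finset E) (q : V → ℚ) (d : V → ℤ) (W : Finset V) : ℚ :=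
  -(∑ w ∈ W, (d w : ℚ)) - (insideE ends W S : ℚ) + (∑ w ∈ W, q w)
    - (valAB ends W Wᶜ : ℚ) / 2

/-- The quantity ε(d, W) = d_W + |S ∩ E(Γ[W])| - q_W - val(W)/2 + val_S(W). -/
def eps [Fintype V] [Fintype E] [DecidableEq V] [DecidableEq E]
    (ends : E → V × V) (S : Finset E) (q : V → ℚ) (d : V → ℤ) (W : Finset V) : ℚ :=
  (∑ w ∈ W, (d w : ℚ)) + (insideE ends W S : ℚ) - (∑ w ∈ W, q w)
    - (valAB ends W Wᶜ : ℚ) / 2 + (valS ends S W Wᶜ : ℚ)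

/-- A 0-cochain `d` is semistable on Γ∖S with respect to `q`. -/
def Semistable [Fintype V] [Fintype E] [DecidableEq V] [DecidableEq E]
    (ends : E → V × V) (S : Finset E) (q : V → ℚ) (d : V → ℤ) : Prop :=
  ((∑ v, d v : ℤ) : ℚ) = (∑ v, q v) - S.card ∧
  ∀ W : Finset V, W ≠ Finset.univ →
    (∑ w ∈ W, (d w : ℚ)) + (insideE ends W S : ℚ) ≥
      (∑ w ∈ W, q w) - (valAB ends W Wᶜ : ℚ) / 2

/-- A 0-cochain `d` is `v₀`-quasistable on Γ∖S with respect to `q`. -/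
def Quasistable [Fintype V] [Fintype E] [DecidableEq V] [DecidableEq E]
    (ends : E → V × V) (S : Finset E) (q : V → ℚ) (v₀ : V) (d : V → ℤ) : Prop :=
  Semistable ends S q d ∧
  ∀ W : Finset V, W ≠ Finset.univ → v₀ ∈ W →
    (∑ w ∈ W, (d w : ℚ)) + (insideE ends W S : ℚ) >
      (∑ w ∈ W, q w) - (valAB ends W Wᶜ : ℚ) / 2

/-- Connectedness of the subgraph induced on `A`. -/
def ConnOn (ends : E → V × V) (A : Finset V) : Prop :=
  ∀ u ∈ A, ∀ v ∈ A,
    Relation.ReflTransGen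
      (fun a b => a ∈ A ∧ b ∈ A ∧ ∃ e : E, ends e = (a, b) ∨ ends e = (b, a)) u v

/-- `C` is a connected component of the subgraph induced on `A`. -/
def IsCompOf [DecidableEq V] (ends : E → V × V) (C A : Finset V) : Prop :=
  C.Nonempty ∧ C ⊆ A ∧ ConnOn ends C ∧
  ∀ e : E, ¬ (((ends e).1 ∈ C ∧ (ends e).2 ∈ A \ C) ∨
    ((ends e).1 ∈ A \ C ∧ (ends e).2 ∈ C))

/-- An edge is a bridge (separating node) if removing it disconnects the graph. -/
def Bridge [Fintype E] [DecidableEq E] (ends : E → V × V) (e : E) : Prop :=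
  ¬ ConnF ends (Finset.univ.erase e)

/-- `e` is a boundary edge of `W`: it joins `W` with its complement. -/
def Boundary (ends : E → V × V) (W : Finset V) (e : E) : Prop :=
  ((ends e).1 ∈ W ∧ (ends e).2 ∉ W) ∨ ((ends e).1 ∉ W ∧ (ends e).2 ∈ W)

/-- `W` is a spine: all of its boundary edges are bridges (separating nodes). -/
def Spine [Fintype E] [DecidableEq E] (ends : E → V × V) (W : Finset V) : Prop :=
  ∀ e : E, Boundary ends W e → Bridge ends e

/-- The polarization `q` is integral at the subcurve `W`: for every connected
component `C` of `W` and of `Wᶜ`, the number q_C - δ_C/2 is an integer. -/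
def IntegralAt [Fintype V] [Fintype E] [DecidableEq V] [DecidableEq E]
    (ends : E → V × V) (q : V → ℚ) (W : Finset V) : Prop :=
  ∀ C : Finset V, (IsCompOf ends C W ∨ IsCompOf ends C Wᶜ) →
    ∃ n : ℤ, (∑ w ∈ C, q w) - (valAB ends C Cᶜ : ℚ) / 2 = (n : ℚ)

/-- The polarization `q` is general: not integral at any proper subcurve. -/
def GeneralPol [Fintype V] [Fintype E] [DecidableEq V] [DecidableEq E]
    (ends : E → V × V) (q : V → ℚ) : Prop :=
  ∀ W : Finset V, W.Nonempty → W ≠ Finset.univ → ¬ IntegralAt ends q W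

/-- The polarization `q` is non-degenerate: not integral at any proper subcurve
which is not a spine. -/
def NonDegPol [Fintype V] [Fintype E] [DecidableEq V] [DecidableEq E]
    (ends : E → V × V) (q : V → ℚ) : Prop :=
  ∀ W : Finset V, W.Nonempty → W ≠ Finset.univ → ¬ Spine ends W →
    ¬ IntegralAt ends q W

/-- A line bundle of multidegree `d` is `q`-semistable. -/
def SemistableLB [Fintype V] [Fintype E] [DecidableEq V] [DecidableEq E]
    (ends : E → V × V) (q : V → ℚ) (d : V → ℤ) : Prop :=
  ((∑ v, d v : ℤ) : ℚ) = (∑ v, q v) ∧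
  ∀ W : Finset V, W ≠ Finset.univ →
    ((∑ w ∈ W, d w : ℤ) : ℚ) ≥ (∑ w ∈ W, q w) - (valAB ends W Wᶜ : ℚ) / 2


/-!
A proper subcurve `W` that is not a spine has a non-separating boundary node. Taking the
symmetric difference of `W` with one side of each separating node in its boundary gives a
subcurve `U` whose boundary nodes are exactly the non-separating boundary nodes of `W`, i.e. a
subcurve coming from the smoothing. Every connected component of `U` or of `Uᶜ` is a disjoint
union of connected components of `W` and of `Wᶜ`, and `q_C - δ_C/2` is additive modulo `ℤ` over
disjoint unions (the defect is `val(A, B)`), so `q` is integral at `U` whenever it is integral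
at `W`. Conversely, since the graph is connected, a proper subcurve has a boundary node, so if
none of them is separating it is not a spine.
-/

section Boundary

variable {ends : E → V × V}

theorem reaches_symm {F : Finset E} {u v : V} (h : Reaches ends F u v) : Reaches ends F v u :=
  (@Relation.ReflTransGen.stdSymm _ _ ⟨fun _ _ ⟨e, he, h⟩ => ⟨e, he, h.symm⟩⟩).symm _ _ h

theorem exists_boundary_of_reaches {F : Finset E} {W : Finset V} {u v : V}
    (h : Reaches ends F u v) (hu : u ∈ W) (hv : v ∉ W) : ∃ e ∈ F, Boundary ends W e := by
  induction h with
  | refl => exact absurd hu hv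
  | @tail m n _ hmn ih =>
    by_cases hm : m ∈ W
    · obtain ⟨e, he, h | h⟩ := hmn
      · exact ⟨e, he, .inl (by simp [h, hm, hv])⟩
      · exact ⟨e, he, .inr (by simp [h, hm, hv])⟩
    · exact ih hm

theorem exists_boundary_of_connF [Fintype V] {F : Finset E} (hconn : ConnF ends F)
    {W : Finset V} (hne : W.Nonempty) (hW : W ≠ univ) : ∃ e, Boundary ends W e := by
  obtain ⟨u, hu⟩ := hne
  obtain ⟨v, hv⟩ := not_forall.1 (mt eq_univ_iff_forall.2 hW)
  obtain ⟨e, -, he⟩ := exists_boundary_of_reaches (hconn u v) hu hv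
  exact ⟨e, he⟩

theorem Boundary.nonempty {W : Finset V} {e : E} (h : Boundary ends W e) : W.Nonempty := by
  rcases h with ⟨h, -⟩ | ⟨-, h⟩ <;> exact ⟨_, h⟩

theorem Boundary.ne_univ [Fintype V] {W : Finset V} {e : E} (h : Boundary ends W e) :
    W ≠ univ := by
  rintro rfl
  rcases h with ⟨-, h⟩ | ⟨h, -⟩ <;> exact h (mem_univ _)

theorem boundary_compl [Fintype V] [DecidableEq V] (W : Finset V) (e : E) :
    Boundary ends Wᶜ e ↔ Boundary ends W e := by
  simp only [Boundary, mem_compl]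
  tauto

theorem boundary_symmDiff [DecidableEq V] (A B : Finset V) (e : E) :
    Boundary ends (symmDiff A B) e ↔ Xor (Boundary ends A e) (Boundary ends B e) := by
  simp only [Boundary, mem_symmDiff, xor_def]
  tauto

theorem exists_boundary_iff_xor (W : Finset V) (B : Finset E)
    (hB : ∀ b ∈ B, ∃ S : Finset V, ∀ e, Boundary ends S e ↔ e = b) :
    ∃ U : Finset V, ∀ e, Boundary ends U e ↔ Xor (Boundary ends W e) (e ∈ B) := by
  classical
  induction B using Finset.induction_on with
  | empty => exact ⟨W, fun e => by simp [xor_def]⟩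
  | insert b B hbB ih =>
    obtain ⟨U, hU⟩ := ih fun c hc => hB c (mem_insert_of_mem hc)
    obtain ⟨S, hS⟩ := hB b (mem_insert_self b B)
    refine ⟨symmDiff U S, fun e => ?_⟩
    rw [boundary_symmDiff, hU, hS, mem_insert]
    by_cases heb : e = b
    · subst heb
      simp only [hbB, xor_def]
      tauto
    · simp [heb, xor_def]

end Boundary

section Bridge

variable [Fintype E] [DecidableEq E] {ends : E → V × V}

theorem not_reaches_erase_of_bridge (hconn : ConnF ends univ) {b : E} (hb : Bridge ends b) :
    ¬ Reaches ends (univ.erase b) (ends b).1 (ends b).2 := by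
  intro hb12
  refine hb fun u v => Relation.reflTransGen_closed (fun x y ⟨e, _, he⟩ => ?_) _ _ (hconn u v)
  by_cases heb : e = b
  · subst heb
    rcases he with he | he <;> rw [he] at hb12
    · exact hb12
    · exact reaches_symm hb12
  · exact .single ⟨e, mem_erase.2 ⟨heb, mem_univ e⟩, he⟩

theorem exists_boundary_iff_eq_of_bridge [Fintype V] (hconn : ConnF ends univ) {b : E}
    (hb : Bridge ends b) : ∃ S : Finset V, ∀ e, Boundary ends S e ↔ e = b := by
  classical
  refine ⟨univ.filter (Reaches ends (univ.erase b) (ends b).1), fun e => ⟨fun he => ?_, ?_⟩⟩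
  · by_contra heb
    have step : ∀ x y, (ends e = (x, y) ∨ ends e = (y, x)) →
        Reaches ends (univ.erase b) (ends b).1 x → Reaches ends (univ.erase b) (ends b).1 y :=
      fun x y hxy hx => hx.tail ⟨e, mem_erase.2 ⟨heb, mem_univ e⟩, hxy⟩
    simp only [Boundary, mem_filter, mem_univ, true_and] at he
    rcases he with ⟨h1, h2⟩ | ⟨h1, h2⟩
    · exact h2 (step _ _ (.inl rfl) h1)
    · exact h1 (step _ _ (.inr rfl) h2)
  · rintro rfl
    exact .inl ⟨mem_filter.2 ⟨mem_univ _, .refl⟩,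
      by simpa using not_reaches_erase_of_bridge hconn hb⟩

theorem exists_boundary_iff_boundary_and_not_bridge [Fintype V] (hconn : ConnF ends univ)
    (W : Finset V) :
    ∃ U : Finset V, ∀ e, Boundary ends U e ↔ Boundary ends W e ∧ ¬ Bridge ends e := by
  classical
  obtain ⟨U, hU⟩ := exists_boundary_iff_xor W
    (univ.filter fun b => Boundary ends W b ∧ Bridge ends b)
    fun b hb => exists_boundary_iff_eq_of_bridge hconn (mem_filter.1 hb).2.2
  refine ⟨U, fun e => ?_⟩
  rw [hU]
  simp only [mem_filter, mem_univ, true_and, xor_def]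
  tauto

end Bridge

section Components

variable {ends : E → V × V}

def AdjIn (ends : E → V × V) (A : Finset V) (a b : V) : Prop :=
  a ∈ A ∧ b ∈ A ∧ ∃ e : E, ends e = (a, b) ∨ ends e = (b, a)

instance (A : Finset V) : Std.Symm (AdjIn ends A) :=
  ⟨fun _ _ ⟨ha, hb, e, he⟩ => ⟨hb, ha, e, he.symm⟩⟩

theorem subset_or_disjoint_of_connOn {D A : Finset V} (hD : ConnOn ends D)
    (hA : ∀ e, (ends e).1 ∈ D → (ends e).2 ∈ D → ¬ Boundary ends A e) :
    D ⊆ A ∨ Disjoint D A := by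
  refine or_iff_not_imp_right.2 fun hmeet => ?_
  obtain ⟨x, hxD, hxA⟩ := not_disjoint_iff.1 hmeet
  intro d hd
  induction hD x hxD d hd with
  | refl => exact hxA
  | @tail m n _ hmn ih =>
    obtain ⟨hm, hn, e, he | he⟩ := hmn <;> by_contra hnA
    · exact hA e (by simp [he, hm]) (by simp [he, hn]) (.inl (by simp [he, ih hm, hnA]))
    · exact hA e (by simp [he, hn]) (by simp [he, hm]) (.inr (by simp [he, ih hm, hnA]))

variable [DecidableEq V]

theorem exists_isCompOf_mem {A : Finset V} {v : V} (hv : v ∈ A) :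
    ∃ C, IsCompOf ends C A ∧ v ∈ C := by
  classical
  set C := A.filter (Relation.ReflTransGen (AdjIn ends A) v)
  have closed : ∀ a b, a ∈ C → AdjIn ends A a b → b ∈ C :=
    fun a b ha hab => mem_filter.2 ⟨hab.2.1, (mem_filter.1 ha).2.tail hab⟩
  have hvC : v ∈ C := mem_filter.2 ⟨hv, .refl⟩
  have hCA : C ⊆ A := filter_subset _ _
  refine ⟨C, ⟨⟨v, hvC⟩, hCA, ?_, fun e he => ?_⟩, hvC⟩
  · have from_v : ∀ u, Relation.ReflTransGen (AdjIn ends A) v u →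
        Relation.ReflTransGen (AdjIn ends C) v u := by
      intro u h
      induction h with
      | refl => exact .refl
      | @tail m n hvm hmn ih =>
        exact ih.tail ⟨mem_filter.2 ⟨hmn.1, hvm⟩, closed m n (mem_filter.2 ⟨hmn.1, hvm⟩) hmn,
          hmn.2.2⟩
    intro a ha b hb
    exact (Std.Symm.symm _ _ (from_v a (mem_filter.1 ha).2)).trans (from_v b (mem_filter.1 hb).2)
  · rcases he with ⟨h1, h2⟩ | ⟨h1, h2⟩
    · exact (mem_sdiff.1 h2).2 (closed _ _ h1 ⟨hCA h1, (mem_sdiff.1 h2).1, e, .inl rfl⟩)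
    · exact (mem_sdiff.1 h1).2 (closed _ _ h2 ⟨hCA h2, (mem_sdiff.1 h1).1, e, .inr rfl⟩)

theorem IsCompOf.subset_or_disjoint {A C D : Finset V} (hC : IsCompOf ends C A) (hDA : D ⊆ A)
    (hD : ConnOn ends D) : D ⊆ C ∨ Disjoint D C :=
  subset_or_disjoint_of_connOn hD fun e h1 h2 hb => hC.2.2.2 e <| by
    rcases hb with ⟨h, h'⟩ | ⟨h', h⟩
    · exact .inl ⟨h, mem_sdiff.2 ⟨hDA h2, h'⟩⟩
    · exact .inr ⟨mem_sdiff.2 ⟨hDA h1, h'⟩, h⟩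

theorem IsCompOf.eq_or_disjoint {A C C' : Finset V} (hC : IsCompOf ends C A)
    (hC' : IsCompOf ends C' A) : C = C' ∨ Disjoint C C' := by
  rcases hC'.subset_or_disjoint hC.2.1 hC.2.2.1 with h | h
  · rcases hC.subset_or_disjoint hC'.2.1 hC'.2.2.1 with h' | h'
    · exact .inl (h.antisymm h')
    · exact .inr h'.symm
  · exact .inr h

variable [Fintype V]

def IsPiece (ends : E → V × V) (W D : Finset V) : Prop :=
  IsCompOf ends D W ∨ IsCompOf ends D Wᶜ

theorem IsPiece.connOn {W D : Finset V} (hD : IsPiece ends W D) : ConnOn ends D :=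
  hD.elim (·.2.2.1) (·.2.2.1)

theorem IsPiece.not_boundary {W D : Finset V} {e : E} (hD : IsPiece ends W D)
    (h1 : (ends e).1 ∈ D) (h2 : (ends e).2 ∈ D) : ¬ Boundary ends W e := by
  rcases hD.imp (·.2.1) (·.2.1) with hD | hD <;> have := hD h1 <;> have := hD h2 <;>
    simp_all [Boundary]

theorem exists_isPiece_mem (W : Finset V) (v : V) : ∃ D, IsPiece ends W D ∧ v ∈ D := by
  by_cases hv : v ∈ W
  · obtain ⟨D, hD, hvD⟩ := exists_isCompOf_mem hv
    exact ⟨D, .inl hD, hvD⟩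
  · obtain ⟨D, hD, hvD⟩ := exists_isCompOf_mem (mem_compl.2 hv)
    exact ⟨D, .inr hD, hvD⟩

theorem IsPiece.eq_or_disjoint {W D D' : Finset V} (hD : IsPiece ends W D)
    (hD' : IsPiece ends W D') : D = D' ∨ Disjoint D D' := by
  rcases hD with hD | hD <;> rcases hD' with hD' | hD'
  · exact hD.eq_or_disjoint hD'
  · exact .inr (disjoint_compl_right.mono hD.2.1 hD'.2.1)
  · exact .inr (disjoint_compl_left.mono hD.2.1 hD'.2.1)
  · exact hD.eq_or_disjoint hD'

end Components

section Integrality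

variable [Fintype V] [Fintype E] [DecidableEq V] [DecidableEq E] {ends : E → V × V}
  {q : V → ℚ}

def IntegralOn (ends : E → V × V) (q : V → ℚ) (C : Finset V) : Prop :=
  ∃ n : ℤ, (∑ w ∈ C, q w) - (valAB ends C Cᶜ : ℚ) / 2 = n

theorem valAB_union_compl {A B : Finset V} (hAB : Disjoint A B) :
    valAB ends (A ∪ B) (A ∪ B)ᶜ + 2 * valAB ends A B = valAB ends A Aᶜ + valAB ends B Bᶜ := by
  simp only [valAB, valS, card_filter, mul_sum, ← sum_add_distrib]
  refine sum_congr rfl fun e _ => ?_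
  have hd := disjoint_left.1 hAB
  by_cases hA1 : (ends e).1 ∈ A <;> by_cases hB1 : (ends e).1 ∈ B <;>
    by_cases hA2 : (ends e).2 ∈ A <;> by_cases hB2 : (ends e).2 ∈ B <;>
    simp_all

theorem integralOn_empty : IntegralOn ends q ∅ :=
  ⟨0, by simp [valAB, valS]⟩

theorem IntegralOn.union {A B : Finset V} (hAB : Disjoint A B) (hA : IntegralOn ends q A)
    (hB : IntegralOn ends q B) : IntegralOn ends q (A ∪ B) := by
  obtain ⟨m, hm⟩ := hA
  obtain ⟨n, hn⟩ := hB
  refine ⟨m + n + valAB ends A B, ?_⟩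
  have hval : (valAB ends (A ∪ B) (A ∪ B)ᶜ : ℚ) + 2 * valAB ends A B
      = valAB ends A Aᶜ + valAB ends B Bᶜ := by exact_mod_cast valAB_union_compl hAB
  rw [sum_union hAB]
  push_cast
  linarith

theorem IntegralAt.integralOn_of_forall_isPiece {W : Finset V} (hint : IntegralAt ends q W)
    (C : Finset V) (hC : ∀ D, IsPiece ends W D → D ⊆ C ∨ Disjoint D C) :
    IntegralOn ends q C := by
  induction C using Finset.strongInduction with
  | H C ih =>
  rcases C.eq_empty_or_nonempty with rfl | ⟨v, hv⟩
  · exact integralOn_empty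
  obtain ⟨D, hD, hvD⟩ := exists_isPiece_mem W v
  have hDC : D ⊆ C := (hC D hD).resolve_right (not_disjoint_iff.2 ⟨v, hvD, hv⟩)
  rw [← union_sdiff_of_subset hDC]
  refine IntegralOn.union disjoint_sdiff (hint D hD)
    (ih _ (sdiff_ssubset hDC ⟨v, hvD⟩) fun D' hD' => ?_)
  rcases hC D' hD' with hD'C | hD'C
  · rcases hD'.eq_or_disjoint hD with rfl | hD'D
    · exact .inr disjoint_sdiff
    · exact .inl (subset_sdiff.2 ⟨hD'C, hD'D⟩)
  · exact .inr (hD'C.mono_right sdiff_subset)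

theorem IntegralAt.of_boundary_subset {W U : Finset V} (hint : IntegralAt ends q W)
    (hU : ∀ e, Boundary ends U e → Boundary ends W e) : IntegralAt ends q U := by
  have of_comp : ∀ A : Finset V, (∀ e, Boundary ends A e → Boundary ends W e) →
      ∀ C, IsCompOf ends C A → IntegralOn ends q C := by
    intro A hA C hC
    refine hint.integralOn_of_forall_isPiece C fun D hD => ?_
    rcases subset_or_disjoint_of_connOn hD.connOn
      (fun e h1 h2 hb => hD.not_boundary h1 h2 (hA e hb)) with hDA | hDA
    · exact hC.subset_or_disjoint hDA hD.connOn
    · exact .inr (hDA.mono_right hC.2.1)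
  rintro C (hC | hC)
  · exact of_comp U hU C hC
  · exact of_comp Uᶜ (fun e he => hU e ((boundary_compl U e).1 he)) C hC

end Integrality

/-- On the dual graph, subcurves of the smoothing `X²` correspond exactly to the proper subsets
`W` none of whose boundary edges is a bridge, and `q²` is computed by `q` with valences taken
in Γ. -/
theorem stmt18_general [Fintype V] [Fintype E] [DecidableEq V] [DecidableEq E] (ends : E → V × V)
    (hconn : ConnF ends (Finset.univ : Finset E)) (q : V → ℚ) :
    NonDegPol ends q ↔
      ∀ W : Finset V, W.Nonempty → W ≠ Finset.univ →
        (∀ e : E, Boundary ends W e → ¬ Bridge ends e) →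
        ¬ IntegralAt ends q W := by
  constructor
  · intro hnd W hne hW hnb
    obtain ⟨e, he⟩ := exists_boundary_of_connF hconn hne hW
    exact hnd W hne hW fun hspine => hnb e he (hspine e he)
  · intro hgen W _ _ hspine hint
    obtain ⟨e, he, hnb⟩ : ∃ e, Boundary ends W e ∧ ¬ Bridge ends e := by
      simpa [Spine] using hspine
    obtain ⟨U, hU⟩ := exists_boundary_iff_boundary_and_not_bridge hconn W
    have heU : Boundary ends U e := (hU e).2 ⟨he, hnb⟩
    exact hgen U heU.nonempty heU.ne_univ (fun e he => ((hU e).1 he).2)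
      (hint.of_boundary_subset fun e he => ((hU e).1 he).1)

/-- `q` is non-degenerate if and only if the induced polarization
`q²` on the smoothing of `X` at its separating nodes is general.  On the dual
graph, subcurves of the smoothing `X²` correspond exactly to the proper subsets
`W` none of whose boundary edges is a bridge, and `q²` is computed by `q` with
valences taken in Γ. -/
theorem stmt18 [Fintype V] [Fintype E] [DecidableEq V] [DecidableEq E] (ends : E → V × V)
    (hconn : ConnF ends (Finset.univ : Finset E)) (q : V → ℚ) (qz : ℤ)
    (hq : ∑ v, q v = (qz : ℚ)) :
    NonDegPol ends q ↔
      ∀ W : Finset V, W.Nonempty → W ≠ Finset.univ →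
        (∀ e : E, Boundary ends W e → ¬ Bridge ends e) →
        ¬ IntegralAt ends q W :=
  stmt18_general ends hconn q
end

section
/- Let Γ be a finite connected graph and S ⊆ E(Γ) with Γ∖S connected, let v₀ ∈ V(Γ) and q ∈ C⁰(Γ,ℚ) with |q| ∈ ℤ. If d ∈ B_{Γ∖S}(q) is semistable but not v₀-quasistable, and Ω⁻(d,v₀) is the minimal subset W containing v₀ with η(d,W) = 0, then the 0-cochain e := d - Δ₀(χ(Ω⁻(d,v₀))) is again semistable (η(e) = 0) and its minimal such subset strictly contains Ω⁻(d,v₀): Ω⁻(e,v₀) ⊋ Ω⁻(d,v₀). -/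
open Finset

variable {V E : Type}

lemma valS_cast [DecidableEq V] [DecidableEq E] (ends : E → V × V) (F : Finset E) (A B : Finset V) :
    (valS ends F A B : ℤ) = ∑ e ∈ F, (if ((ends e).1 ∈ A ∧ (ends e).2 ∈ B) ∨ ((ends e).1 ∈ B ∧ (ends e).2 ∈ A) then (1:ℤ) else 0) := by
  rw [valS, Finset.card_filter]
  push_cast
  rfl

lemma sum_point [DecidableEq V] (s : Finset V) (x : V) (f : V → ℤ) (P : Prop) [Decidable P] :
    ∑ v ∈ s, (if v = x ∧ P then f v else 0) = if x ∈ s ∧ P then f x else 0 := by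
  by_cases hP : P
  · simp only [hP, and_true]; exact Finset.sum_ite_eq' s x f
  · simp [hP]

lemma innerSumAux [Fintype V] [DecidableEq V] (c : V → ℤ) (a b v : V) :
    ∑ w ∈ Finset.univ.erase v, c w * (if ((a ∈ ({v}:Finset V) ∧ b ∈ ({w}:Finset V)) ∨ (a ∈ ({w}:Finset V) ∧ b ∈ ({v}:Finset V))) then (1:ℤ) else 0)
    = (if a = v ∧ ¬ b = v then c b else 0) + (if b = v ∧ ¬ a = v then c a else 0) := by
  have step : ∀ w ∈ Finset.univ.erase v,
      c w * (if ((a ∈ ({v}:Finset V) ∧ b ∈ ({w}:Finset V)) ∨ (a ∈ ({w}:Finset V) ∧ b ∈ ({v}:Finset V))) then (1:ℤ) else 0)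
      = (if w = b ∧ (a = v ∧ ¬ b = v) then c b else 0) + (if w = a ∧ (b = v ∧ ¬ a = v) then c a else 0) := by
    intro w hw
    simp only [Finset.mem_erase, Finset.mem_univ, and_true] at hw
    simp only [Finset.mem_singleton]
    by_cases h1 : a = v <;> by_cases h2 : b = v <;> by_cases h3 : w = a <;> by_cases h4 : w = b <;>
      simp_all <;> (try ring) <;> (intro h; simp_all)
  rw [Finset.sum_congr rfl step, Finset.sum_add_distrib, sum_point, sum_point]
  by_cases h1 : a = v <;> by_cases h2 : b = v <;> simp_all [Finset.mem_erase]

lemma lapF_eq_sum [Fintype V] [Fintype E] [DecidableEq V] [DecidableEq E] (ends : E → V × V)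
    (F : Finset E) (c : V → ℤ) (v : V) :
    lapF ends F c v = ∑ e ∈ F,
      ((if (ends e).1 = v ∧ ¬ (ends e).2 = v then c (ends e).2 - c (ends e).1 else 0) +
       (if (ends e).2 = v ∧ ¬ (ends e).1 = v then c (ends e).1 - c (ends e).2 else 0)) := by
  rw [lapF, valS_cast, Finset.mul_sum]
  have h2 : ∑ w ∈ Finset.univ.erase v, c w * (valS ends F {v} {w} : ℤ)
      = ∑ e ∈ F, ((if (ends e).1 = v ∧ ¬ (ends e).2 = v then c (ends e).2 else 0) +
                  (if (ends e).2 = v ∧ ¬ (ends e).1 = v then c (ends e).1 else 0)) := by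
    rw [Finset.sum_congr rfl (fun w _ => by rw [valS_cast, Finset.mul_sum])]
    rw [Finset.sum_comm]
    exact Finset.sum_congr rfl (fun e _ => innerSumAux c (ends e).1 (ends e).2 v)
  rw [h2, ← Finset.sum_add_distrib]
  refine Finset.sum_congr rfl (fun e _ => ?_)
  simp only [Finset.mem_singleton, Finset.mem_compl]
  by_cases h1 : (ends e).1 = v <;> by_cases h2 : (ends e).2 = v <;> simp_all <;> ring

lemma lap_sum [Fintype V] [Fintype E] [DecidableEq V] [DecidableEq E] (ends : E → V × V)
    (F : Finset E) (Ω W : Finset V) :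
    ∑ v ∈ W, lapF ends F (chi Ω) v
      = (valS ends F (W \ Ω) (Ω \ W) : ℤ) - (valS ends F (Ω ∩ W) ((Ω ∪ W)ᶜ) : ℤ) := by
  simp only [lapF_eq_sum]
  rw [Finset.sum_comm, valS_cast, valS_cast, ← Finset.sum_sub_distrib]
  refine Finset.sum_congr rfl fun e _ => ?_
  rw [Finset.sum_add_distrib]
  have e1 : ∀ v ∈ W, (if (ends e).1 = v ∧ ¬ (ends e).2 = v then chi Ω (ends e).2 - chi Ω (ends e).1 else 0)
      = (if v = (ends e).1 ∧ ¬ (ends e).2 = (ends e).1 then chi Ω (ends e).2 - chi Ω (ends e).1 else 0) := by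
    intro v _
    by_cases h : (ends e).1 = v
    · subst h; simp
    · have h' : ¬ v = (ends e).1 := fun h' => h h'.symm
      simp [h, h']
  have e2 : ∀ v ∈ W, (if (ends e).2 = v ∧ ¬ (ends e).1 = v then chi Ω (ends e).1 - chi Ω (ends e).2 else 0)
      = (if v = (ends e).2 ∧ ¬ (ends e).1 = (ends e).2 then chi Ω (ends e).1 - chi Ω (ends e).2 else 0) := by
    intro v _
    by_cases h : (ends e).2 = v
    · subst h; simp
    · have h' : ¬ v = (ends e).2 := fun h' => h h'.symm
      simp [h, h']
  rw [Finset.sum_congr rfl e1, Finset.sum_congr rfl e2, sum_point, sum_point]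
  simp only [Finset.mem_sdiff, Finset.mem_inter, Finset.mem_union, Finset.mem_compl, not_or]
  by_cases hab : (ends e).1 = (ends e).2
  · by_cases h1 : (ends e).1 ∈ W <;> by_cases h2 : (ends e).2 ∈ W <;>
      by_cases h3 : (ends e).1 ∈ Ω <;> by_cases h4 : (ends e).2 ∈ Ω <;>
      simp_all [chi]
  · have hba : ¬ (ends e).2 = (ends e).1 := fun h => hab h.symm
    by_cases h1 : (ends e).1 ∈ W <;> by_cases h2 : (ends e).2 ∈ W <;>
      by_cases h3 : (ends e).1 ∈ Ω <;> by_cases h4 : (ends e).2 ∈ Ω <;>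
      simp_all [chi]

lemma insideE_cast [DecidableEq V] [DecidableEq E] (ends : E → V × V) (W : Finset V) (F : Finset E) :
    (insideE ends W F : ℤ) = ∑ e ∈ F, if (ends e).1 ∈ W ∧ (ends e).2 ∈ W then (1:ℤ) else 0 := by
  rw [insideE, Finset.card_filter]; push_cast; rfl

lemma valS_right_empty [DecidableEq V] [DecidableEq E] (ends : E → V × V) (F : Finset E) (A : Finset V) :
    valS ends F A ∅ = 0 := by simp [valS]

lemma insideE_submod [DecidableEq V] [DecidableEq E] (ends : E → V × V) (S : Finset E) (W Ω : Finset V) :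
    (insideE ends (W ∩ Ω) S : ℤ) + insideE ends (W ∪ Ω) S
      = insideE ends W S + insideE ends Ω S + valS ends S (W \ Ω) (Ω \ W) := by
  simp only [insideE_cast, valS_cast, ← Finset.sum_add_distrib]
  refine Finset.sum_congr rfl fun e _ => ?_
  simp only [Finset.mem_inter, Finset.mem_union, Finset.mem_sdiff]
  by_cases h1 : (ends e).1 ∈ W <;> by_cases h2 : (ends e).2 ∈ W <;>
    by_cases h3 : (ends e).1 ∈ Ω <;> by_cases h4 : (ends e).2 ∈ Ω <;> simp_all

lemma valAB_submod [Fintype V] [Fintype E] [DecidableEq V] [DecidableEq E] (ends : E → V × V) (W Ω : Finset V) :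
    (valAB ends (W ∩ Ω) (W ∩ Ω)ᶜ : ℤ) + valAB ends (W ∪ Ω) (W ∪ Ω)ᶜ
        + 2 * valS ends Finset.univ (W \ Ω) (Ω \ W)
      = valAB ends W Wᶜ + valAB ends Ω Ωᶜ := by
  simp only [valAB, valS_cast, Finset.mul_sum, ← Finset.sum_add_distrib]
  refine Finset.sum_congr rfl fun e _ => ?_
  simp only [Finset.mem_inter, Finset.mem_union, Finset.mem_sdiff, Finset.mem_compl, not_and, not_or, not_not]
  by_cases h1 : (ends e).1 ∈ W <;> by_cases h2 : (ends e).2 ∈ W <;>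
    by_cases h3 : (ends e).1 ∈ Ω <;> by_cases h4 : (ends e).2 ∈ Ω <;> simp_all

lemma valS_split [Fintype E] [DecidableEq V] [DecidableEq E] (ends : E → V × V) (S : Finset E) (A B : Finset V) :
    (valS ends Finset.univ A B : ℤ) = valS ends S A B + valS ends (Finset.univ \ S) A B := by
  rw [valS_cast, valS_cast, valS_cast, ← Finset.sum_sdiff (Finset.subset_univ S)]
  ring

lemma eta_submod [Fintype V] [Fintype E] [DecidableEq V] [DecidableEq E] (ends : E → V × V)
    (S : Finset E) (q : V → ℚ) (d : V → ℤ) (W Ω : Finset V) :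
    eta ends S q d (W ∩ Ω) + eta ends S q d (W ∪ Ω)
      = eta ends S q d W + eta ends S q d Ω + (valS ends (Finset.univ \ S) (W \ Ω) (Ω \ W) : ℚ) := by
  have hd : ∑ w ∈ W ∪ Ω, (d w : ℚ) + ∑ w ∈ W ∩ Ω, (d w : ℚ)
      = ∑ w ∈ W, (d w : ℚ) + ∑ w ∈ Ω, (d w : ℚ) := Finset.sum_union_inter
  have hq : ∑ w ∈ W ∪ Ω, q w + ∑ w ∈ W ∩ Ω, q w
      = ∑ w ∈ W, q w + ∑ w ∈ Ω, q w := Finset.sum_union_inter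
  have h1 : ((insideE ends (W ∩ Ω) S : ℤ) : ℚ) + ((insideE ends (W ∪ Ω) S : ℤ) : ℚ)
      = ((insideE ends W S : ℤ) : ℚ) + ((insideE ends Ω S : ℤ) : ℚ)
        + ((valS ends S (W \ Ω) (Ω \ W) : ℤ) : ℚ) := by
    exact_mod_cast congrArg (fun z : ℤ => (z : ℚ)) (insideE_submod ends S W Ω)
  have h2 : ((valAB ends (W ∩ Ω) (W ∩ Ω)ᶜ : ℤ) : ℚ) + ((valAB ends (W ∪ Ω) (W ∪ Ω)ᶜ : ℤ) : ℚ)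
        + 2 * ((valS ends Finset.univ (W \ Ω) (Ω \ W) : ℤ) : ℚ)
      = ((valAB ends W Wᶜ : ℤ) : ℚ) + ((valAB ends Ω Ωᶜ : ℤ) : ℚ) := by
    exact_mod_cast congrArg (fun z : ℤ => (z : ℚ)) (valAB_submod ends W Ω)
  have h3 : ((valS ends Finset.univ (W \ Ω) (Ω \ W) : ℤ) : ℚ)
      = ((valS ends S (W \ Ω) (Ω \ W) : ℤ) : ℚ)
        + ((valS ends (Finset.univ \ S) (W \ Ω) (Ω \ W) : ℤ) : ℚ) := by
    exact_mod_cast congrArg (fun z : ℤ => (z : ℚ)) (valS_split ends S (W \ Ω) (Ω \ W))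
  rw [eta, eta, eta, eta]
  push_cast at h1 h2 h3 ⊢
  linarith

lemma eta_sub_lap [Fintype V] [Fintype E] [DecidableEq V] [DecidableEq E] (ends : E → V × V)
    (S : Finset E) (q : V → ℚ) (d L : V → ℤ) (W : Finset V) :
    eta ends S q (fun v => d v - L v) W = eta ends S q d W + ((∑ v ∈ W, L v : ℤ) : ℚ) := by
  rw [eta, eta]
  push_cast
  rw [Finset.sum_sub_distrib]
  ring

lemma eta_univ [Fintype V] [Fintype E] [DecidableEq V] [DecidableEq E] (ends : E → V × V)
    (S : Finset E) (q : V → ℚ) (d : V → ℤ)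
    (h : ((∑ v, d v : ℤ) : ℚ) = (∑ v, q v) - S.card) :
    eta ends S q d Finset.univ = 0 := by
  have h1 : insideE ends Finset.univ S = S.card := by simp [insideE]
  have h2 : valAB ends Finset.univ Finset.univᶜ = 0 := by simp [valAB, valS]
  rw [eta, h1, h2]
  push_cast at h ⊢
  linarith

lemma cross_pos [Fintype V] [Fintype E] [DecidableEq V] [DecidableEq E] (ends : E → V × V)
    (F : Finset E) (Ω : Finset V) (hconn : ConnF ends F) (u w : V) (hu : u ∈ Ω) (hw : w ∉ Ω) :
    0 < valS ends F Ω Ωᶜ := by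
  have key : ∀ x y : V, Reaches ends F x y → x ∈ Ω → y ∉ Ω →
      ∃ e ∈ F, ((ends e).1 ∈ Ω ∧ (ends e).2 ∈ Ωᶜ) ∨ ((ends e).1 ∈ Ωᶜ ∧ (ends e).2 ∈ Ω) := by
    intro x y h
    induction h with
    | refl => intro h1 h2; exact absurd h1 h2
    | @tail b c hxb hstep ih =>
      intro hx hy
      by_cases hb : b ∈ Ω
      · obtain ⟨e, he, hcase⟩ := hstep
        refine ⟨e, he, ?_⟩
        rcases hcase with h' | h' <;> rw [h'] <;> simp [Finset.mem_compl, hb, hy]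
      · exact ih hx hb
  obtain ⟨e, he, hc⟩ := key u w (hconn u w) hu hw
  rw [valS, Finset.card_pos]
  exact ⟨e, Finset.mem_filter.mpr ⟨he, hc⟩⟩

/-- in the notation of Step III of the proof, if `d` is semistable
but not v₀-quasistable and `Ω` is the minimal subset containing `v₀` with
η(d, Ω) = 0, then `e := d - Δ₀(χ(Ω))` is again semistable and the minimal subset
containing `v₀` on which `η(e, ·)` vanishes strictly contains `Ω`. -/
theorem stmt19 [Fintype V] [Fintype E] [DecidableEq V] [DecidableEq E] (ends : E → V × V) (S : Finset E) (q : V → ℚ) (qz : ℤ)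
    (hq : ∑ v, q v = (qz : ℚ)) (v₀ : V)
    (hconn : ConnF ends (Finset.univ \ S)) (d : V → ℤ)
    (hss : Semistable ends S q d) (Ω : Finset V)
    (hv : v₀ ∈ Ω) (hΩ : eta ends S q d Ω = 0)
    (hmin : ∀ W : Finset V, v₀ ∈ W → eta ends S q d W = 0 → Ω ⊆ W)
    (hne : Ω ≠ Finset.univ) :
    Semistable ends S q
        (fun v => d v - lapF ends (Finset.univ \ S) (chi Ω) v) ∧
      ∀ W : Finset V, v₀ ∈ W →
        eta ends S q (fun v => d v - lapF ends (Finset.univ \ S) (chi Ω) v) W = 0 →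
        Ω ⊆ W ∧ Ω ≠ W := by
  set F := Finset.univ \ S with hF
  have hsum_univ : ∑ v, lapF ends F (chi Ω) v = 0 := by
    rw [lap_sum]
    have h1 : Ω \ Finset.univ = ∅ := Finset.sdiff_eq_empty_iff_subset.mpr (Finset.subset_univ Ω)
    have h2 : (Ω ∪ Finset.univ)ᶜ = (∅ : Finset V) := by simp
    rw [h1, h2, valS_right_empty, valS_right_empty]
    ring
  have etaD_le : ∀ W : Finset V, eta ends S q d W ≤ 0 := by
    intro W
    by_cases hW : W = Finset.univ
    · rw [hW, eta_univ ends S q d hss.1]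
    · have := hss.2 W hW
      rw [eta]
      linarith
  have hkey : ∀ W : Finset V,
      eta ends S q (fun v => d v - lapF ends F (chi Ω) v) W
        = eta ends S q d (W ∩ Ω) + eta ends S q d (W ∪ Ω)
          - ((valS ends F (Ω ∩ W) ((Ω ∪ W)ᶜ) : ℤ) : ℚ) := by
    intro W
    have hl := lap_sum ends F Ω W
    have hsm := eta_submod ends S q d W Ω
    rw [hΩ] at hsm
    rw [eta_sub_lap, hl]
    push_cast at hsm ⊢
    linarith
  have hvalnn : ∀ (A B : Finset V), (0:ℚ) ≤ ((valS ends F A B : ℤ) : ℚ) := by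
    intro A B; positivity
  have etaE_le : ∀ W : Finset V, eta ends S q (fun v => d v - lapF ends F (chi Ω) v) W ≤ 0 := by
    intro W
    rw [hkey W]
    have h1 := etaD_le (W ∩ Ω)
    have h2 := etaD_le (W ∪ Ω)
    have h3 := hvalnn (Ω ∩ W) ((Ω ∪ W)ᶜ)
    linarith
  have hsum' : ((∑ v, (d v - lapF ends F (chi Ω) v) : ℤ) : ℚ) = (∑ v, q v) - S.card := by
    rw [Finset.sum_sub_distrib, hsum_univ]
    have h1 := hss.1
    push_cast at h1 ⊢
    linarith
  refine ⟨⟨hsum', ?_⟩, ?_⟩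
  · intro W hW
    have := etaE_le W
    rw [eta] at this
    push_cast at this ⊢
    linarith
  · intro W hv₀W hetaW
    by_cases hWu : W = Finset.univ
    · exact hWu ▸ ⟨Finset.subset_univ Ω, hne⟩
    · have h := hkey W
      rw [hetaW] at h
      have h1 := etaD_le (W ∩ Ω)
      have h2 := etaD_le (W ∪ Ω)
      have h3 := hvalnn (Ω ∩ W) ((Ω ∪ W)ᶜ)
      have hz : eta ends S q d (W ∩ Ω) = 0 := by linarith
      have hd0 : ((valS ends F (Ω ∩ W) ((Ω ∪ W)ᶜ) : ℤ) : ℚ) = 0 := by linarith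
      have hsub : Ω ⊆ W :=
        (hmin (W ∩ Ω) (Finset.mem_inter.mpr ⟨hv₀W, hv⟩) hz).trans Finset.inter_subset_left
      refine ⟨hsub, ?_⟩
      intro hEq
      subst hEq
      obtain ⟨u, hu⟩ : ∃ u, u ∉ Ω := by
        by_contra hcon
        push_neg at hcon
        exact hne (Finset.eq_univ_iff_forall.mpr hcon)
      have hpos := cross_pos ends F Ω hconn v₀ u hv hu
      rw [Finset.inter_self, Finset.union_self] at hd0
      have : (0:ℚ) < ((valS ends F Ω Ωᶜ : ℤ) : ℚ) := by exact_mod_cast hpos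
      rw [hd0] at this
      exact lt_irrefl 0 this
end
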